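/- arXiv:1805.02596 — 2 statements merged into one kernel-verified Lean document; each statement's English description precedes it below -/
import Mathlib

section
/- The map α: Aut(X) × Q_k → ℤ defined by α(g, x) = −i, where i is the unique integer with g x ∈ σ^i Q_k, is a cocycle, and the formula g · x = σ^{α(g,x)}(g x) defines a group action of Aut(X) on Q_k under which σ acts trivially. -/
def shift {A : Type*} (x : ℤ → A) : ℤ → A := fun n => x (n + 1)

def shiftIter {A : Type*} (i : ℤ) (x : ℤ → A) : ℤ → A := fun n => x (n + i)

def Qset {A : Type*} (X : Set (ℤ → A)) (k : ℕ) : Set (ℤ → A) :=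
  {x | x ∈ X ∧ (∀ n : ℤ, n < k → x n = x (n - k)) ∧ x (k : ℤ) ≠ x ((k : ℤ) - k) ∧
    ∀ k' : ℕ, 0 < k' → k' < k → ¬ ∀ n : ℤ, n < k → x n = x (n - k')}

/-- `g` is an automorphism: it commutes with the shift. -/
def CommutesWithShift {A : Type*} [TopologicalSpace A] (X : Set (ℤ → A)) (g : X ≃ₜ X) : Prop :=
  ∀ (x : X) (hs : shift (x : ℤ → A) ∈ X),
    ((g ⟨shift (x : ℤ → A), hs⟩ : X) : ℤ → A) = shift ((g x : X) : ℤ → A)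

/-!
An automorphism commutes with every power of the shift, so if `σ^a (h x) ∈ Q_k` then
`g (σ^a (h x)) = σ^a (g (h x))`. Both `σ^{α(gh,x)} (gh x)` and `σ^{α(g,h·x) + α(h,x)} (gh x)`
therefore lie in `Q_k`, and the cocycle identity follows because a point of `Q_k` has no
nontrivial translate in `Q_k`: if `y` and `σ^i y` with `i > 0` are both in `Q_k`, the
periodicity of `σ^i y` below index `k` forces `y k = y 0`, which the definition excludes.
The action law and the triviality of `id` and `σ` follow from the same uniqueness.
-/

section Shift

variable {A : Type*}

theorem shiftIter_zero (x : ℤ → A) : shiftIter 0 x = x := by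
  funext n; simp [shiftIter]

theorem shiftIter_shiftIter (a b : ℤ) (x : ℤ → A) :
    shiftIter a (shiftIter b x) = shiftIter (a + b) x := by
  funext n; simp only [shiftIter]; congr 1; ring

theorem shiftIter_add_one (i : ℤ) (x : ℤ → A) :
    shiftIter (i + 1) x = shift (shiftIter i x) := by
  funext n; simp only [shiftIter, shift]; congr 1; ring

theorem shiftIter_shift (a : ℤ) (x : ℤ → A) : shiftIter a (shift x) = shiftIter (a + 1) x :=
  shiftIter_shiftIter a 1 x

theorem shiftIter_natCast_mem {X : Set (ℤ → A)} (hinv : ∀ x ∈ X, shift x ∈ X) (m : ℕ)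
    {x : ℤ → A} (hx : x ∈ X) : shiftIter m x ∈ X := by
  induction m with
  | zero => simpa [shiftIter_zero] using hx
  | succ m ih => push_cast; rw [shiftIter_add_one]; exact hinv _ ih

end Shift

namespace Qset

variable {A : Type*} {X : Set (ℤ → A)} {k : ℕ}

theorem not_shiftIter_mem_of_pos {x : ℤ → A} (hx : x ∈ Qset X k) {i : ℤ} (hi : 0 < i) :
    shiftIter i x ∉ Qset X k := by
  intro hix
  have hper := hix.2.1 ((k : ℤ) - i) (by omega)
  simp only [shiftIter, sub_add_cancel, show (k : ℤ) - i - k + i = k - k by ring] at hper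
  exact hx.2.2.1 hper

theorem eq_zero_of_shiftIter_mem {x : ℤ → A} (hx : x ∈ Qset X k) {i : ℤ}
    (hix : shiftIter i x ∈ Qset X k) : i = 0 := by
  rcases lt_trichotomy i 0 with hneg | hzero | hpos
  · refine absurd ?_ (not_shiftIter_mem_of_pos hix (neg_pos.mpr hneg))
    rwa [shiftIter_shiftIter, neg_add_cancel, shiftIter_zero]
  · exact hzero
  · exact absurd hix (not_shiftIter_mem_of_pos hx hpos)

theorem shiftIter_eq_self {x : ℤ → A} (hx : x ∈ Qset X k) {i : ℤ}
    (hix : shiftIter i x ∈ Qset X k) : shiftIter i x = x := by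
  rw [eq_zero_of_shiftIter_mem hx hix, shiftIter_zero]

theorem eq_of_shiftIter_mem {x : ℤ → A} {a b : ℤ} (ha : shiftIter a x ∈ Qset X k)
    (hb : shiftIter b x ∈ Qset X k) : a = b := by
  have hab : shiftIter (a - b) (shiftIter b x) ∈ Qset X k := by
    rwa [shiftIter_shiftIter, sub_add_cancel]
  exact sub_eq_zero.mp (eq_zero_of_shiftIter_mem hb hab)

end Qset

namespace CommutesWithShift

variable {A : Type*} [TopologicalSpace A] {X : Set (ℤ → A)}

theorem refl : CommutesWithShift X (Homeomorph.refl X) := fun _ _ => rfl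

theorem trans {g h : X ≃ₜ X} (hg : CommutesWithShift X g) (hh : CommutesWithShift X h) :
    CommutesWithShift X (h.trans g) := by
  intro x hs
  have hshift := hh x hs
  have hs' : shift ((h x : X) : ℤ → A) ∈ X := hshift ▸ (h ⟨shift x, hs⟩).2
  show ((g (h ⟨shift x, hs⟩) : X) : ℤ → A) = shift ((g (h x) : X) : ℤ → A)
  rw [show h ⟨shift x, hs⟩ = ⟨_, hs'⟩ from Subtype.ext hshift]
  exact hg (h x) hs'

variable (hinv : ∀ x ∈ X, shift x ∈ X) {g : X ≃ₜ X}
include hinv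

theorem map_shiftIter_natCast (hg : CommutesWithShift X g) (m : ℕ) (x : X)
    (hx : shiftIter m (x : ℤ → A) ∈ X) :
    ((g ⟨shiftIter m (x : ℤ → A), hx⟩ : X) : ℤ → A) = shiftIter m ((g x : X) : ℤ → A) := by
  induction m with
  | zero => simp only [Nat.cast_zero, shiftIter_zero]
  | succ m ih =>
    have hm := shiftIter_natCast_mem hinv m x.2
    have hs : shift (shiftIter m (x : ℤ → A)) ∈ X := hinv _ hm
    have hsucc : (⟨shiftIter (m + 1 : ℕ) (x : ℤ → A), hx⟩ : X) = ⟨_, hs⟩ :=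
      Subtype.ext (by push_cast; exact shiftIter_add_one _ _)
    rw [hsucc, hg ⟨_, hm⟩ hs, ih hm]
    push_cast
    exact (shiftIter_add_one _ _).symm

theorem map_shiftIter (hg : CommutesWithShift X g) (i : ℤ) (x : X)
    (hx : shiftIter i (x : ℤ → A) ∈ X) :
    ((g ⟨shiftIter i (x : ℤ → A), hx⟩ : X) : ℤ → A) = shiftIter i ((g x : X) : ℤ → A) := by
  obtain ⟨m, rfl | rfl⟩ := Int.eq_nat_or_neg i
  · exact hg.map_shiftIter_natCast hinv m x hx
  · -- write `x = σ^m z` with `z = σ^{-m} x`, so that only forward shifts are needed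
    set z : X := ⟨_, hx⟩
    have hxz : x = ⟨shiftIter m (z : ℤ → A), by
        rw [shiftIter_shiftIter, add_neg_cancel, shiftIter_zero]; exact x.2⟩ :=
      Subtype.ext (by simp only [z, shiftIter_shiftIter, add_neg_cancel, shiftIter_zero])
    conv_rhs => rw [hxz, hg.map_shiftIter_natCast hinv m z, shiftIter_shiftIter, neg_add_cancel,
      shiftIter_zero]

end CommutesWithShift

theorem stmt9_general {A : Type*} [TopologicalSpace A]
    (X : Set (ℤ → A))
    (hinv : ∀ x ∈ X, shift x ∈ X)
    (k : ℕ)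
    (α : (X ≃ₜ X) → (ℤ → A) → ℤ)
    (hα : ∀ g : X ≃ₜ X, CommutesWithShift X g → ∀ (x : ℤ → A) (hx : x ∈ Qset X k),
      shiftIter (α g x) ((g ⟨x, hx.1⟩ : X) : ℤ → A) ∈ Qset X k) :
    -- the cocycle identity `α(gh, x) = α(g, h·x) + α(h, x)`
    (∀ (g h : X ≃ₜ X) (hg : CommutesWithShift X g) (hh : CommutesWithShift X h)
      (x : ℤ → A) (hx : x ∈ Qset X k),
      α (h.trans g) x
        = α g (shiftIter (α h x) ((h ⟨x, hx.1⟩ : X) : ℤ → A)) + α h x) ∧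
    -- `g · x = σ^{α(g,x)}(g x)` is an action: `(gh) · x = g · (h · x)`
    (∀ (g h : X ≃ₜ X) (hg : CommutesWithShift X g) (hh : CommutesWithShift X h)
      (x : ℤ → A) (hx : x ∈ Qset X k),
      shiftIter (α (h.trans g) x) (((h.trans g) ⟨x, hx.1⟩ : X) : ℤ → A)
        = shiftIter (α g (shiftIter (α h x) ((h ⟨x, hx.1⟩ : X) : ℤ → A)))
            ((g ⟨shiftIter (α h x) ((h ⟨x, hx.1⟩ : X) : ℤ → A),
                (hα h hh x hx).1⟩ : X) : ℤ → A)) ∧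
    -- the identity automorphism acts trivially
    (∀ (x : ℤ → A) (hx : x ∈ Qset X k),
      shiftIter (α (Homeomorph.refl X) x) (((Homeomorph.refl X) ⟨x, hx.1⟩ : X) : ℤ → A) = x) ∧
    -- the shift `σ` acts trivially
    (∀ S : X ≃ₜ X, (∀ x : X, ((S x : X) : ℤ → A) = shift (x : ℤ → A)) →
      CommutesWithShift X S →
      ∀ (x : ℤ → A) (hx : x ∈ Qset X k),
        shiftIter (α S x) ((S ⟨x, hx.1⟩ : X) : ℤ → A) = x) := by
  have hcomm : ∀ (g h : X ≃ₜ X) (hg : CommutesWithShift X g) (hh : CommutesWithShift X h)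
      (x : ℤ → A) (hx : x ∈ Qset X k),
      ((g ⟨shiftIter (α h x) ((h ⟨x, hx.1⟩ : X) : ℤ → A), (hα h hh x hx).1⟩ : X) : ℤ → A)
        = shiftIter (α h x) (((h.trans g) ⟨x, hx.1⟩ : X) : ℤ → A) :=
    fun g h hg hh x hx => hg.map_shiftIter hinv (α h x) (h ⟨x, hx.1⟩) (hα h hh x hx).1
  have hcocycle : ∀ (g h : X ≃ₜ X) (hg : CommutesWithShift X g) (hh : CommutesWithShift X h)
      (x : ℤ → A) (hx : x ∈ Qset X k),
      α (h.trans g) x = α g (shiftIter (α h x) ((h ⟨x, hx.1⟩ : X) : ℤ → A)) + α h x := by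
    intro g h hg hh x hx
    have hmem := hα g hg _ (hα h hh x hx)
    rw [hcomm g h hg hh x hx, shiftIter_shiftIter] at hmem
    exact Qset.eq_of_shiftIter_mem (hα _ (hg.trans hh) x hx) hmem
  refine ⟨hcocycle, fun g h hg hh x hx => ?_, fun x hx => ?_, fun S hS hSc x hx => ?_⟩
  · rw [hcocycle g h hg hh x hx, hcomm g h hg hh x hx, shiftIter_shiftIter]
  · exact Qset.shiftIter_eq_self hx (hα _ CommutesWithShift.refl x hx)
  · have hmem := hα S hSc x hx
    rw [hS, shiftIter_shift] at hmem ⊢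
    exact Qset.shiftIter_eq_self hx hmem

/-- `α` is a cocycle and `g · x = σ^{α(g,x)}(g x)` defines an action of `Aut(X)` on
`Q_k`, under which `σ` acts trivially. -/
theorem stmt9 {A : Type*} [Fintype A] [TopologicalSpace A] [DiscreteTopology A]
    (X : Set (ℤ → A)) (hcl : IsClosed X)
    (hinv : ∀ x ∈ X, shift x ∈ X) (hinv' : ∀ x ∈ X, (fun n : ℤ => x (n - 1)) ∈ X)
    (k : ℕ) (hk : 0 < k) (hQ : (Qset X k).Nonempty)
    (α : (X ≃ₜ X) → (ℤ → A) → ℤ)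
    (hα : ∀ g : X ≃ₜ X, CommutesWithShift X g → ∀ (x : ℤ → A) (hx : x ∈ Qset X k),
      shiftIter (α g x) ((g ⟨x, hx.1⟩ : X) : ℤ → A) ∈ Qset X k) :
    -- the cocycle identity `α(gh, x) = α(g, h·x) + α(h, x)`
    (∀ (g h : X ≃ₜ X) (hg : CommutesWithShift X g) (hh : CommutesWithShift X h)
      (x : ℤ → A) (hx : x ∈ Qset X k),
      α (h.trans g) x
        = α g (shiftIter (α h x) ((h ⟨x, hx.1⟩ : X) : ℤ → A)) + α h x) ∧
    -- `g · x = σ^{α(g,x)}(g x)` is an action: `(gh) · x = g · (h · x)`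
    (∀ (g h : X ≃ₜ X) (hg : CommutesWithShift X g) (hh : CommutesWithShift X h)
      (x : ℤ → A) (hx : x ∈ Qset X k),
      shiftIter (α (h.trans g) x) (((h.trans g) ⟨x, hx.1⟩ : X) : ℤ → A)
        = shiftIter (α g (shiftIter (α h x) ((h ⟨x, hx.1⟩ : X) : ℤ → A)))
            ((g ⟨shiftIter (α h x) ((h ⟨x, hx.1⟩ : X) : ℤ → A),
                (hα h hh x hx).1⟩ : X) : ℤ → A)) ∧
    -- the identity automorphism acts trivially
    (∀ (x : ℤ → A) (hx : x ∈ Qset X k),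
      shiftIter (α (Homeomorph.refl X) x) (((Homeomorph.refl X) ⟨x, hx.1⟩ : X) : ℤ → A) = x) ∧
    -- the shift `σ` acts trivially
    (∀ S : X ≃ₜ X, (∀ x : X, ((S x : X) : ℤ → A) = shift (x : ℤ → A)) →
      CommutesWithShift X S →
      ∀ (x : ℤ → A) (hx : x ∈ Qset X k),
        shiftIter (α S x) ((S ⟨x, hx.1⟩ : X) : ℤ → A) = x) :=
  stmt9_general X hinv k α hα
end

section
/- For a subshift X containing a left-k-periodic point, the map π: Q_k → Per_k/⟨σ⟩ sending a left-k-periodic point x to the σ-orbit of the unique k-periodic point y with y_n = x_n for all n < k is well-defined and Aut(X)-equivariant. -/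
/-! If `x` is left-`k`-periodic, the backward shifts `σ^{-mk} x` converge, as `m → ∞`, to every
`k`-periodic point agreeing with `x` far enough to the left, for instance to `n ↦ x (n mod k)`.
So that point lies in the closed set `X`, and it is unique because `A^ℤ` is Hausdorff. An
automorphism `g` maps `σ^{-mk} x` to `σ^{-mk} (g x)`; by continuity these converge to `g y`, and
they also converge to the periodic point shadowing `g x`, so the two coincide. -/

open Filter Topology Function

section

variable {A : Type*}

lemma comp_sub_natCast_mem {X : Set (ℤ → A)} (hX : ∀ x ∈ X, (fun n : ℤ => x (n - 1)) ∈ X)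
    {x : ℤ → A} (hx : x ∈ X) (j : ℕ) : (fun n : ℤ => x (n - j)) ∈ X := by
  induction j with
  | zero => simpa using hx
  | succ j ih => simpa [sub_add_eq_sub_sub, sub_right_comm] using hX _ ih

lemma pos_of_mem_Qset {X : Set (ℤ → A)} {k : ℕ} {x : ℤ → A} (hx : x ∈ Qset X k) : 0 < k :=
  Nat.pos_of_ne_zero fun hk => hx.2.2.1 (by simp [hk])

lemma apply_sub_nat_mul_of_lt {x : ℤ → A} {c : ℤ} (hx : ∀ n < c, x n = x (n - c)) (hc : 0 ≤ c)
    (m : ℕ) {n : ℤ} (hn : n < c) :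
    x (n - m * c) = x n := by
  induction m with
  | zero => simp
  | succ m ih =>
    have hlt : n - m * c < c := by nlinarith
    rw [← ih, hx _ hlt]
    congr 1
    push_cast
    ring

lemma apply_emod_of_lt {x : ℤ → A} {c : ℤ} (hx : ∀ n < c, x n = x (n - c)) (hc : 0 < c) {n : ℤ}
    (hn : n < c) : x (n % c) = x n := by
  obtain ⟨m, hm⟩ := Int.exists_eq_neg_ofNat (show n / c ≤ 0 by
    have := Int.ediv_lt_of_lt_mul hc (show n < 1 * c by simpa using hn)
    omega)
  have hdecomp : n % c - m * c = n := by rw [Int.emod_def, hm]; ring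
  rw [← apply_sub_nat_mul_of_lt hx hc.le m (Int.emod_lt_of_pos n hc), hdecomp]

lemma periodic_comp_emod (x : ℤ → A) (c : ℤ) : Periodic (fun n => x (n % c)) c := fun n => by
  simp

lemma tendsto_comp_sub_nat_mul [TopologicalSpace A] {x y : ℤ → A} {k : ℕ} (hk : 0 < k)
    (hy : Periodic y k) {M : ℤ} (hxy : ∀ n < M, x n = y n) :
    Tendsto (fun m : ℕ => fun n : ℤ => x (n - ↑(m * k))) atTop (𝓝 y) := by
  refine tendsto_pi_nhds.2 fun n => tendsto_const_nhds.congr' ?_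
  filter_upwards [eventually_ge_atTop (n - M + 1).toNat] with m hm
  have hm : n - M + 1 ≤ m := Int.toNat_le.mp hm
  have hk : (1 : ℤ) ≤ k := by exact_mod_cast hk
  have hlt : n - ↑(m * k) < M := by push_cast; nlinarith
  rw [hxy _ hlt, Nat.cast_mul, hy.sub_nat_mul_eq]

namespace CommutesWithShift

variable [TopologicalSpace A] {X : Set (ℤ → A)} {g : X ≃ₜ X}

lemma apply_comp_sub_one (hg : CommutesWithShift X g) {v w : X}
    (hvw : (v : ℤ → A) = fun n => (w : ℤ → A) (n - 1)) :
    (g v : ℤ → A) = fun n => (g w : ℤ → A) (n - 1) := by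
  have hs : shift (v : ℤ → A) = w := by funext n; simp [shift, hvw]
  have hgw : (g w : ℤ → A) = shift (g v) := by
    rw [← hg v (hs ▸ w.2)]
    congr
    exact Subtype.ext hs.symm
  simp [hgw, shift]

lemma apply_comp_sub_nat (hX : ∀ x ∈ X, (fun n : ℤ => x (n - 1)) ∈ X)
    (hg : CommutesWithShift X g) (j : ℕ) {v w : X}
    (hvw : (v : ℤ → A) = fun n => (w : ℤ → A) (n - j)) :
    (g v : ℤ → A) = fun n => (g w : ℤ → A) (n - j) := by
  induction j generalizing v w with
  | zero => simp [show v = w from Subtype.ext (by simpa using hvw)]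
  | succ j ih =>
    let w' : X := ⟨fun n => (w : ℤ → A) (n - 1), hX _ w.2⟩
    have hw' := hg.apply_comp_sub_one (v := w') (w := w) rfl
    rw [ih (w := w') (by rw [hvw]; funext n; simp [w', sub_sub]), hw']
    funext n
    simp [sub_sub]

end CommutesWithShift

end

theorem stmt11_general {A : Type*} [TopologicalSpace A] [DiscreteTopology A]
    (X : Set (ℤ → A)) (hcl : IsClosed X)
    (hinv' : ∀ x ∈ X, (fun n : ℤ => x (n - 1)) ∈ X)
    (k : ℕ) :
    (∀ x ∈ Qset X k, ∃! y : ℤ → A,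
      y ∈ X ∧ (∀ n : ℤ, y (n + k) = y n) ∧ ∀ n : ℤ, n < k → y n = x n) ∧
    (∀ g : X ≃ₜ X, CommutesWithShift X g →
      ∀ (x : ℤ → A) (hx : x ∈ Qset X k) (y : ℤ → A)
        (hy : y ∈ X ∧ (∀ n : ℤ, y (n + k) = y n) ∧ ∀ n : ℤ, n < k → y n = x n)
        (y' : ℤ → A),
        (y' ∈ X ∧ (∀ n : ℤ, y' (n + k) = y' n) ∧
          ∃ M : ℤ, ∀ n : ℤ, n < M → y' n = ((g ⟨x, hx.1⟩ : X) : ℤ → A) n) →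
        ∃ i : ℤ, y' = shiftIter i ((g ⟨y, hy.1⟩ : X) : ℤ → A)) := by
  refine ⟨fun x hx => ?_, fun g hg x hx y hy y' ⟨_, hy'per, M, hy'gx⟩ => ⟨0, ?_⟩⟩
  · have hk := pos_of_mem_Qset hx
    obtain ⟨hxX, hxper, -⟩ := hx
    have hxy : ∀ n < (k : ℤ), x n = x (n % k) := fun n hn =>
      (apply_emod_of_lt hxper (by exact_mod_cast hk) hn).symm
    have hlim := tendsto_comp_sub_nat_mul hk (periodic_comp_emod x k) hxy
    refine ⟨fun n => x (n % k), ⟨?_, periodic_comp_emod x k, fun n hn => (hxy n hn).symm⟩, ?_⟩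
    · exact hcl.mem_of_tendsto hlim (.of_forall fun m => comp_sub_natCast_mem hinv' hxX _)
    · rintro y ⟨-, hyper, hyx⟩
      exact tendsto_nhds_unique (tendsto_comp_sub_nat_mul hk hyper fun n hn => (hyx n hn).symm)
        hlim
  · have hk := pos_of_mem_Qset hx
    let z (m : ℕ) : X := ⟨fun n => x (n - ↑(m * k)), comp_sub_natCast_mem hinv' hx.1 _⟩
    have hz : Tendsto z atTop (𝓝 ⟨y, hy.1⟩) := tendsto_subtype_rng.2 <|
      tendsto_comp_sub_nat_mul hk hy.2.1 fun n hn => (hy.2.2 n hn).symm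
    have hgz : Tendsto (fun m => (g (z m) : ℤ → A)) atTop (𝓝 y') := by
      have hgzm (m : ℕ) : (g (z m) : ℤ → A) = fun n => (g ⟨x, hx.1⟩ : ℤ → A) (n - ↑(m * k)) :=
        hg.apply_comp_sub_nat hinv' _ rfl
      simp_rw [hgzm]
      exact tendsto_comp_sub_nat_mul hk hy'per fun n hn => (hy'gx n hn).symm
    have hgy := (continuous_subtype_val.comp g.continuous).tendsto _ |>.comp hz
    exact (tendsto_nhds_unique hgz hgy).trans (by funext n; simp [shiftIter])

/-- The projection `π : Q_k → Per_k/⟨σ⟩` is well-defined (every `x ∈ Q_k` determines a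
unique `k`-periodic point of `X` agreeing with it below index `k`) and
`Aut(X)`-equivariant (the `k`-periodic point shadowing `g x` lies in the `σ`-orbit of
the image under `g` of the `k`-periodic point shadowing `x`). -/
theorem stmt11 {A : Type*} [Fintype A] [TopologicalSpace A] [DiscreteTopology A]
    (X : Set (ℤ → A)) (hcl : IsClosed X)
    (hinv : ∀ x ∈ X, shift x ∈ X) (hinv' : ∀ x ∈ X, (fun n : ℤ => x (n - 1)) ∈ X)
    (k : ℕ) (hk : 0 < k) :
    (∀ x ∈ Qset X k, ∃! y : ℤ → A,
      y ∈ X ∧ (∀ n : ℤ, y (n + k) = y n) ∧ ∀ n : ℤ, n < k → y n = x n) ∧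
    (∀ g : X ≃ₜ X, CommutesWithShift X g →
      ∀ (x : ℤ → A) (hx : x ∈ Qset X k) (y : ℤ → A)
        (hy : y ∈ X ∧ (∀ n : ℤ, y (n + k) = y n) ∧ ∀ n : ℤ, n < k → y n = x n)
        (y' : ℤ → A),
        (y' ∈ X ∧ (∀ n : ℤ, y' (n + k) = y' n) ∧
          ∃ M : ℤ, ∀ n : ℤ, n < M → y' n = ((g ⟨x, hx.1⟩ : X) : ℤ → A) n) →
        ∃ i : ℤ, y' = shiftIter i ((g ⟨y, hy.1⟩ : X) : ℤ → A)) :=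
  stmt11_general X hcl hinv' k
end
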